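/- arXiv:1404.5494 — 6 statements merged into one kernel-verified Lean document; each statement's English description precedes it below -/
import Mathlib

section
/- Let X be a nonempty type, let F be a nonempty set of functions X → ℝ closed under scalar multiplication, and let L₀, L₁ : (X → ℝ) → ℝ be nonnegative and absolutely homogeneous on F. Fix ε with 0 < ε < 1 and assume the sandwich (1-ε)·L₀(f) ≤ L₁(f) ≤ (1+ε)·L₀(f) for every f ∈ F. Fix x, y ∈ X and assume the set { |f(x) - f(y)| : f ∈ F, L₀(f) ≤ 1 } is bounded above. Then (1-ε)·ρ_{L₁}(x,y) ≤ ρ_{L₀}(x,y) ≤ (1+ε)·ρ_{L₁}(x,y). -/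
/-! If `c • L' ≤ L` on `F`, then rescaling by `c` maps the `L`-unit ball of `F` into the
`L'`-unit ball, so `c ρ_L ≤ ρ_{L'}`. Applied with `c = 1 - ε` and `c = (1 + ε)⁻¹` this gives
the two halves of the sandwich; the boundedness of the `L₀`-set transfers to the `L₁`-set in the
same way, which the second half needs. -/

/-- The metric on points associated to a Lip-norm `L` on a set `F` of functions:
`ρ_L(x,y) = sSup { |f x - f y| : f ∈ F, L f ≤ 1 }`. -/
noncomputable def lipNormMetric {X : Type*} (F : Set (X → ℝ)) (L : (X → ℝ) → ℝ)
    (x y : X) : ℝ :=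
  sSup {r : ℝ | ∃ f ∈ F, L f ≤ 1 ∧ r = |f x - f y|}

section LipNormMetric

variable {X : Type*} {F : Set (X → ℝ)} {L L' : (X → ℝ) → ℝ} {c : ℝ} {x y : X}

def lipDiffSet (F : Set (X → ℝ)) (L : (X → ℝ) → ℝ) (x y : X) : Set ℝ :=
  {r : ℝ | ∃ f ∈ F, L f ≤ 1 ∧ r = |f x - f y|}

theorem lipNormMetric_eq_sSup : lipNormMetric F L x y = sSup (lipDiffSet F L x y) := rfl

theorem lipNormMetric_nonneg : 0 ≤ lipNormMetric F L x y :=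
  Real.sSup_nonneg fun _ ⟨_, _, _, hr⟩ => hr ▸ abs_nonneg _

variable (hsmul : ∀ f ∈ F, c • f ∈ F) (hhom : ∀ f ∈ F, L' (c • f) = c * L' f)
  (hle : ∀ f ∈ F, c * L' f ≤ L f)
include hsmul hhom hle

theorem mul_mem_lipDiffSet (hc : 0 ≤ c) {r : ℝ} (hr : r ∈ lipDiffSet F L x y) :
    c * r ∈ lipDiffSet F L' x y := by
  obtain ⟨f, hf, hLf, rfl⟩ := hr
  refine ⟨c • f, hsmul f hf, (hhom f hf).trans_le ((hle f hf).trans hLf), ?_⟩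
  simp only [Pi.smul_apply, smul_eq_mul, ← mul_sub, abs_mul, abs_of_nonneg hc]

theorem bddAbove_lipDiffSet_of_mul_le (hc : 0 < c) (hbdd : BddAbove (lipDiffSet F L' x y)) :
    BddAbove (lipDiffSet F L x y) := by
  obtain ⟨M, hM⟩ := hbdd
  refine ⟨c⁻¹ * M, fun r hr => ?_⟩
  rw [le_inv_mul_iff₀ hc]
  exact hM (mul_mem_lipDiffSet hsmul hhom hle hc.le hr)

theorem mul_lipNormMetric_le_of_mul_le (hc : 0 ≤ c) (hbdd : BddAbove (lipDiffSet F L' x y)) :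
    c * lipNormMetric F L x y ≤ lipNormMetric F L' x y := by
  rw [lipNormMetric_eq_sSup, ← smul_eq_mul, ← Real.sSup_smul_of_nonneg hc]
  refine Real.sSup_le ?_ lipNormMetric_nonneg
  rintro _ ⟨r, hr, rfl⟩
  exact le_csSup hbdd (mul_mem_lipDiffSet hsmul hhom hle hc hr)

end LipNormMetric

theorem sandwich_of_lipnorms_gives_metric_sandwich_general
    {X : Type*} (F : Set (X → ℝ))
    (hFsmul : ∀ f ∈ F, ∀ c : ℝ, c • f ∈ F)
    (L₀ L₁ : (X → ℝ) → ℝ)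
    (hL₀hom : ∀ f ∈ F, ∀ c : ℝ, L₀ (c • f) = |c| * L₀ f)
    (hL₁hom : ∀ f ∈ F, ∀ c : ℝ, L₁ (c • f) = |c| * L₁ f)
    (ε : ℝ) (hε0 : 0 < ε) (hε1 : ε < 1)
    (hlow : ∀ f ∈ F, (1 - ε) * L₀ f ≤ L₁ f)
    (hhigh : ∀ f ∈ F, L₁ f ≤ (1 + ε) * L₀ f)
    (x y : X)
    (hbdd : BddAbove {r : ℝ | ∃ f ∈ F, L₀ f ≤ 1 ∧ r = |f x - f y|}) :
    (1 - ε) * lipNormMetric F L₁ x y ≤ lipNormMetric F L₀ x y ∧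
      lipNormMetric F L₀ x y ≤ (1 + ε) * lipNormMetric F L₁ x y := by
  have hlow_pos : 0 < 1 - ε := by linarith
  have hhigh_pos : 0 < (1 + ε)⁻¹ := by positivity
  have hL₀hom_low : ∀ f ∈ F, L₀ ((1 - ε) • f) = (1 - ε) * L₀ f := fun f hf => by
    rw [hL₀hom f hf, abs_of_pos hlow_pos]
  have hL₁hom_high : ∀ f ∈ F, L₁ ((1 + ε)⁻¹ • f) = (1 + ε)⁻¹ * L₁ f := fun f hf => by
    rw [hL₁hom f hf, abs_of_pos hhigh_pos]
  have hhigh' : ∀ f ∈ F, (1 + ε)⁻¹ * L₁ f ≤ L₀ f := fun f hf => by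
    rw [inv_mul_le_iff₀ (by linarith)]
    exact hhigh f hf
  have hsmul_low := fun f hf => hFsmul f hf (1 - ε)
  have hbdd₁ : BddAbove (lipDiffSet F L₁ x y) :=
    bddAbove_lipDiffSet_of_mul_le hsmul_low hL₀hom_low hlow hlow_pos hbdd
  refine ⟨mul_lipNormMetric_le_of_mul_le hsmul_low hL₀hom_low hlow hlow_pos.le hbdd, ?_⟩
  rw [← inv_mul_le_iff₀ (by linarith)]
  exact mul_lipNormMetric_le_of_mul_le (fun f hf => hFsmul f hf _) hL₁hom_high hhigh'
    hhigh_pos.le hbdd₁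

theorem sandwich_of_lipnorms_gives_metric_sandwich
    {X : Type*} [Nonempty X] (F : Set (X → ℝ)) (hFne : F.Nonempty)
    (hFsmul : ∀ f ∈ F, ∀ c : ℝ, c • f ∈ F)
    (L₀ L₁ : (X → ℝ) → ℝ)
    (hL₀nn : ∀ f ∈ F, 0 ≤ L₀ f)
    (hL₀hom : ∀ f ∈ F, ∀ c : ℝ, L₀ (c • f) = |c| * L₀ f)
    (hL₁nn : ∀ f ∈ F, 0 ≤ L₁ f)
    (hL₁hom : ∀ f ∈ F, ∀ c : ℝ, L₁ (c • f) = |c| * L₁ f)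
    (ε : ℝ) (hε0 : 0 < ε) (hε1 : ε < 1)
    (hlow : ∀ f ∈ F, (1 - ε) * L₀ f ≤ L₁ f)
    (hhigh : ∀ f ∈ F, L₁ f ≤ (1 + ε) * L₀ f)
    (x y : X)
    (hbdd : BddAbove {r : ℝ | ∃ f ∈ F, L₀ f ≤ 1 ∧ r = |f x - f y|}) :
    (1 - ε) * lipNormMetric F L₁ x y ≤ lipNormMetric F L₀ x y ∧
      lipNormMetric F L₀ x y ≤ (1 + ε) * lipNormMetric F L₁ x y :=
  sandwich_of_lipnorms_gives_metric_sandwich_general F hFsmul L₀ L₁ hL₀hom hL₁hom ε hε0 hε1 hlow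
    hhigh x y hbdd
end

section
/- (Equivalence criterion for Lip-norm metrics.) Let X be a nonempty type, F a nonempty set of functions X → ℝ closed under scalar multiplication, and let L₀, L₁ : (X → ℝ) → ℝ be nonnegative and absolutely homogeneous on F. Suppose there is a constant C with 0 ≤ C < 1 such that |L₀(f) - L₁(f)| ≤ C·L₀(f) for all f ∈ F, and suppose for all x, y ∈ X the set { |f(x) - f(y)| : f ∈ F, L₀(f) ≤ 1 } is bounded above. Then the associated metrics are equivalent: for all x, y ∈ X, (1-C)·ρ_{L₁}(x,y) ≤ ρ_{L₀}(x,y) ≤ (1+C)·ρ_{L₁}(x,y). -/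
theorem bddAbove_of_mul_mem {𝕜 : Type*} [Field 𝕜] [LinearOrder 𝕜] [IsStrictOrderedRing 𝕜]
    {S T : Set 𝕜} {c : 𝕜} (hc : 0 < c) (hT : BddAbove T) (hST : ∀ s ∈ S, c * s ∈ T) :
    BddAbove S := by
  obtain ⟨b, hb⟩ := hT
  exact ⟨b / c, fun s hs => (le_div_iff₀' hc).2 (hb (hST s hs))⟩

open scoped Pointwise in
/-- `S` may be empty: then `sSup S = 0`, and `0 ≤ sSup T` since `T` has no negative elements. -/
theorem Real.mul_sSup_le_sSup_of_mul_mem {S T : Set ℝ} {c : ℝ} (hc : 0 ≤ c) (hT : BddAbove T)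
    (hT0 : ∀ t ∈ T, 0 ≤ t) (hST : ∀ s ∈ S, c * s ∈ T) : c * sSup S ≤ sSup T :=
  calc c * sSup S = sSup (c • S) := (Real.sSup_smul_of_nonneg hc S).symm
    _ ≤ sSup T := Real.sSup_le (by rintro _ ⟨s, hs, rfl⟩; exact le_csSup hT (hST s hs))
        (Real.sSup_nonneg hT0)

section LipNorm

variable {X : Type*} (F : Set (X → ℝ)) (L : (X → ℝ) → ℝ)

/-- `lipNormMetric F L x y` is by definition the `sSup` of this set. -/
def lipUnitBallDiffs (x y : X) : Set ℝ :=
  {r : ℝ | ∃ f ∈ F, L f ≤ 1 ∧ r = |f x - f y|}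

theorem nonneg_of_mem_lipUnitBallDiffs {x y : X} {r : ℝ} (hr : r ∈ lipUnitBallDiffs F L x y) :
    0 ≤ r := by
  obtain ⟨f, -, -, rfl⟩ := hr
  exact abs_nonneg _

variable {F L} {L' : (X → ℝ) → ℝ} {c : ℝ}

theorem mul_mem_lipUnitBallDiffs (hF : ∀ f ∈ F, ∀ c : ℝ, c • f ∈ F)
    (hL' : ∀ f ∈ F, ∀ c : ℝ, L' (c • f) = |c| * L' f) (hc : 0 ≤ c)
    (hLL' : ∀ f ∈ F, c * L' f ≤ L f) (x y : X) :
    ∀ r ∈ lipUnitBallDiffs F L x y, c * r ∈ lipUnitBallDiffs F L' x y := by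
  rintro _ ⟨f, hf, hLf, rfl⟩
  refine ⟨c • f, hF f hf c, ?_, ?_⟩
  · rw [hL' f hf, abs_of_nonneg hc]
    exact (hLL' f hf).trans hLf
  · simp only [Pi.smul_apply, smul_eq_mul, ← mul_sub, abs_mul, abs_of_nonneg hc]

theorem mul_lipNormMetric_le (hF : ∀ f ∈ F, ∀ c : ℝ, c • f ∈ F)
    (hL' : ∀ f ∈ F, ∀ c : ℝ, L' (c • f) = |c| * L' f) (hc : 0 ≤ c)
    (hLL' : ∀ f ∈ F, c * L' f ≤ L f) {x y : X} (hbdd : BddAbove (lipUnitBallDiffs F L' x y)) :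
    c * lipNormMetric F L x y ≤ lipNormMetric F L' x y :=
  Real.mul_sSup_le_sSup_of_mul_mem hc hbdd (fun _ => nonneg_of_mem_lipUnitBallDiffs F L')
    (mul_mem_lipUnitBallDiffs hF hL' hc hLL' x y)

theorem bddAbove_lipUnitBallDiffs (hF : ∀ f ∈ F, ∀ c : ℝ, c • f ∈ F)
    (hL' : ∀ f ∈ F, ∀ c : ℝ, L' (c • f) = |c| * L' f) (hc : 0 < c)
    (hLL' : ∀ f ∈ F, c * L' f ≤ L f) {x y : X} (hbdd : BddAbove (lipUnitBallDiffs F L' x y)) :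
    BddAbove (lipUnitBallDiffs F L x y) :=
  bddAbove_of_mul_mem hc hbdd (mul_mem_lipUnitBallDiffs hF hL' hc.le hLL' x y)

end LipNorm

theorem equivalence_criterion_for_lipnorm_metrics_general
    {X : Type*} (F : Set (X → ℝ))
    (hFsmul : ∀ f ∈ F, ∀ c : ℝ, c • f ∈ F)
    (L₀ L₁ : (X → ℝ) → ℝ)
    (hL₀hom : ∀ f ∈ F, ∀ c : ℝ, L₀ (c • f) = |c| * L₀ f)
    (hL₁hom : ∀ f ∈ F, ∀ c : ℝ, L₁ (c • f) = |c| * L₁ f)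
    (C : ℝ) (hC0 : 0 ≤ C) (hC1 : C < 1)
    (hest : ∀ f ∈ F, |L₀ f - L₁ f| ≤ C * L₀ f)
    (hbdd : ∀ x y : X, BddAbove {r : ℝ | ∃ f ∈ F, L₀ f ≤ 1 ∧ r = |f x - f y|}) :
    ∀ x y : X,
      (1 - C) * lipNormMetric F L₁ x y ≤ lipNormMetric F L₀ x y ∧
        lipNormMetric F L₀ x y ≤ (1 + C) * lipNormMetric F L₁ x y := by
  intro x y
  have h1C : 0 < 1 - C := by linarith
  have h1C' : 0 < 1 + C := by linarith
  have hlow : ∀ f ∈ F, (1 - C) * L₀ f ≤ L₁ f := fun f hf => by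
    linarith [(abs_le.mp (hest f hf)).2]
  have hup : ∀ f ∈ F, (1 + C)⁻¹ * L₁ f ≤ L₀ f := fun f hf =>
    (inv_mul_le_iff₀ h1C').2 (by linarith [(abs_le.mp (hest f hf)).1])
  have hbdd₁ : BddAbove (lipUnitBallDiffs F L₁ x y) :=
    bddAbove_lipUnitBallDiffs hFsmul hL₀hom h1C hlow (hbdd x y)
  refine ⟨mul_lipNormMetric_le hFsmul hL₀hom h1C.le hlow (hbdd x y), ?_⟩
  exact (inv_mul_le_iff₀ h1C').1
    (mul_lipNormMetric_le hFsmul hL₁hom (inv_nonneg.2 h1C'.le) hup hbdd₁)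

theorem equivalence_criterion_for_lipnorm_metrics
    {X : Type*} [Nonempty X] (F : Set (X → ℝ)) (hFne : F.Nonempty)
    (hFsmul : ∀ f ∈ F, ∀ c : ℝ, c • f ∈ F)
    (L₀ L₁ : (X → ℝ) → ℝ)
    (hL₀nn : ∀ f ∈ F, 0 ≤ L₀ f)
    (hL₀hom : ∀ f ∈ F, ∀ c : ℝ, L₀ (c • f) = |c| * L₀ f)
    (hL₁nn : ∀ f ∈ F, 0 ≤ L₁ f)
    (hL₁hom : ∀ f ∈ F, ∀ c : ℝ, L₁ (c • f) = |c| * L₁ f)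
    (C : ℝ) (hC0 : 0 ≤ C) (hC1 : C < 1)
    (hest : ∀ f ∈ F, |L₀ f - L₁ f| ≤ C * L₀ f)
    (hbdd : ∀ x y : X, BddAbove {r : ℝ | ∃ f ∈ F, L₀ f ≤ 1 ∧ r = |f x - f y|}) :
    ∀ x y : X,
      (1 - C) * lipNormMetric F L₁ x y ≤ lipNormMetric F L₀ x y ∧
        lipNormMetric F L₀ x y ≤ (1 + C) * lipNormMetric F L₁ x y :=
  equivalence_criterion_for_lipnorm_metrics_general F hFsmul L₀ L₁ hL₀hom hL₁hom C hC0 hC1 hest hbdd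
end

section
/- Let K be a field, let L be a Lie algebra over K, let R ∈ ℕ with R ≥ 1, and let V : ℕ → Submodule K L be a family of submodules such that V(0) = ⊥, V(S) = ⊥ for all S > R, the submodules V(1), …, V(R) together span L (their supremum is ⊤), and for all S, T and all x ∈ V(S), y ∈ V(T) one has ⁅x, y⁆ ∈ V(S+T). Then for every M with 1 ≤ M ≤ R and every K-submodule W ≤ V(M), the submodule n := W ⊔ (⨆_{S > M} V(S)) is a Lie ideal of L, and the quotient Lie algebra L ⧸ n is nilpotent. -/
/-!
Writing `L_{>k}` for the sum of the layers `V S` with `S > k`, the grading gives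
`⁅L, L_{>k}⁆ ≤ L_{>k+1}`: each layer has positive degree, so bracketing with it raises the degree.
Since `L = L_{>0}`, the lower central series satisfies `C^k L ≤ L_{>k}`, and `L_{>R} = 0`, so `L`
is nilpotent, and so is every quotient of it. The kernel `W ⊔ L_{>M}` is an ideal because
`⁅L, W⁆ ≤ ⁅L, V M⁆ ≤ L_{>M}` and `⁅L, L_{>M}⁆ ≤ L_{>M+1} ≤ L_{>M}`.
-/

theorem LieIdeal.isNilpotent_quotient {R L : Type*} [CommRing R] [LieRing L] [LieAlgebra R L]
    [LieRing.IsNilpotent L] (I : LieIdeal R L) : LieRing.IsNilpotent (L ⧸ I) :=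
  Function.Surjective.lieAlgebra_isNilpotent
    (f := { LieSubmodule.Quotient.mk' I with map_lie' := rfl }) Quot.mk_surjective

namespace GradedLieAlgebra

variable {K L : Type*} [CommRing K] [LieRing L] [LieAlgebra K L] (V : ℕ → Submodule K L)

def layersAbove (k : ℕ) : Submodule K L := ⨆ S ∈ Set.Ioi k, V S

variable {V}

theorem le_layersAbove {S k : ℕ} (h : k < S) : V S ≤ layersAbove V k :=
  le_biSup V h

theorem layersAbove_antitone : Antitone (layersAbove V) :=
  fun _ _ hkl => biSup_mono fun _ hS => lt_of_le_of_lt hkl hS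

theorem layersAbove_eq_bot {R : ℕ} (hhigh : ∀ S, R < S → V S = ⊥) : layersAbove V R = ⊥ :=
  eq_bot_iff.mpr <| iSup₂_le fun S hS => (hhigh S hS).le

theorem layersAbove_zero_eq_top {R : ℕ} (hspan : ⨆ S ∈ Set.Icc 1 R, V S = ⊤) :
    layersAbove V 0 = ⊤ :=
  eq_top_iff.mpr <| hspan.symm.le.trans <| iSup₂_le fun _ hS => le_layersAbove hS.1

variable (hgen : layersAbove V 0 = ⊤)
  (hbracket : ∀ S T : ℕ, ∀ x ∈ V S, ∀ y ∈ V T, ⁅x, y⁆ ∈ V (S + T))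
include hgen hbracket

theorem lie_mem_layersAbove_of_mem {T : ℕ} {y : L} (hy : y ∈ V T) (x : L) :
    ⁅x, y⁆ ∈ layersAbove V T := by
  rw [← lie_skew]
  refine neg_mem ?_
  have hx : x ∈ layersAbove V 0 := hgen ▸ Submodule.mem_top
  suffices layersAbove V 0 ≤ (layersAbove V T).comap (LieAlgebra.ad K L y) from this hx
  refine iSup₂_le fun S (hS : 0 < S) z hz => ?_
  exact le_layersAbove (by omega) (hbracket T S y hy z hz)

theorem lie_mem_layersAbove_succ {k : ℕ} {y : L} (hy : y ∈ layersAbove V k) (x : L) :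
    ⁅x, y⁆ ∈ layersAbove V (k + 1) := by
  suffices layersAbove V k ≤ (layersAbove V (k + 1)).comap (LieAlgebra.ad K L x) from this hy
  refine iSup₂_le fun T (hT : k < T) z hz => ?_
  exact layersAbove_antitone hT (lie_mem_layersAbove_of_mem hgen hbracket hz x)

theorem lie_mem_layersAbove {k : ℕ} {y : L} (hy : y ∈ layersAbove V k) (x : L) :
    ⁅x, y⁆ ∈ layersAbove V k :=
  layersAbove_antitone k.le_succ (lie_mem_layersAbove_succ hgen hbracket hy x)

def layersAboveIdeal (k : ℕ) : LieIdeal K L :=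
  { layersAbove V k with lie_mem := fun hy => lie_mem_layersAbove hgen hbracket hy _ }

theorem lowerCentralSeries_le_layersAbove (k : ℕ) :
    (LieModule.lowerCentralSeries K L L k).toSubmodule ≤ layersAbove V k := by
  induction k with
  | zero => simp [hgen]
  | succ k ih =>
    change LieModule.lowerCentralSeries K L L (k + 1) ≤ layersAboveIdeal hgen hbracket (k + 1)
    rw [LieModule.lowerCentralSeries_succ, LieSubmodule.lie_le_iff]
    exact fun x _ y hy => lie_mem_layersAbove_succ hgen hbracket (ih hy) x

theorem isNilpotent {R : ℕ} (hhigh : ∀ S, R < S → V S = ⊥) : LieRing.IsNilpotent L := by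
  refine LieModule.IsNilpotent.mk (R := K) (L := L) (M := L) (k := R) ?_
  rw [← LieSubmodule.toSubmodule_eq_bot, ← le_bot_iff, ← layersAbove_eq_bot hhigh]
  exact lowerCentralSeries_le_layersAbove hgen hbracket R

theorem lie_mem_sup_layersAbove {M : ℕ} {W : Submodule K L} (hW : W ≤ V M) {y : L}
    (hy : y ∈ W ⊔ layersAbove V M) (x : L) : ⁅x, y⁆ ∈ W ⊔ layersAbove V M := by
  obtain ⟨w, hw, z, hz, rfl⟩ := Submodule.mem_sup.mp hy
  rw [lie_add]
  exact add_mem (Submodule.mem_sup_right (lie_mem_layersAbove_of_mem hgen hbracket (hW hw) x))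
    (Submodule.mem_sup_right (lie_mem_layersAbove hgen hbracket hz x))

end GradedLieAlgebra

open GradedLieAlgebra in
theorem graded_kernel_is_ideal_with_nilpotent_quotient_general
    {K : Type*} [Field K] {L : Type*} [LieRing L] [LieAlgebra K L]
    (R : ℕ) (V : ℕ → Submodule K L)
    (hVhigh : ∀ S : ℕ, R < S → V S = ⊥)
    (hspan : (⨆ S ∈ Set.Icc 1 R, V S) = ⊤)
    (hbracket : ∀ S T : ℕ, ∀ x ∈ V S, ∀ y ∈ V T, ⁅x, y⁆ ∈ V (S + T))
    (M : ℕ)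
    (W : Submodule K L) (hW : W ≤ V M) :
    ∃ I : LieIdeal K L,
      I.toSubmodule = W ⊔ (⨆ S ∈ Set.Ioi M, V S) ∧
        LieRing.IsNilpotent (L ⧸ I) := by
  have hgen := layersAbove_zero_eq_top hspan
  have := isNilpotent hgen hbracket hVhigh
  exact ⟨{ W ⊔ layersAbove V M with
      lie_mem := fun hy => lie_mem_sup_layersAbove hgen hbracket hW hy _ }, rfl,
    LieIdeal.isNilpotent_quotient _⟩

theorem graded_kernel_is_ideal_with_nilpotent_quotient
    {K : Type*} [Field K] {L : Type*} [LieRing L] [LieAlgebra K L]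
    (R : ℕ) (hR : 1 ≤ R) (V : ℕ → Submodule K L)
    (hV0 : V 0 = ⊥)
    (hVhigh : ∀ S : ℕ, R < S → V S = ⊥)
    (hspan : (⨆ S ∈ Set.Icc 1 R, V S) = ⊤)
    (hbracket : ∀ S T : ℕ, ∀ x ∈ V S, ∀ y ∈ V T, ⁅x, y⁆ ∈ V (S + T))
    (M : ℕ) (hM1 : 1 ≤ M) (hMR : M ≤ R)
    (W : Submodule K L) (hW : W ≤ V M) :
    ∃ I : LieIdeal K L,
      I.toSubmodule = W ⊔ (⨆ S ∈ Set.Ioi M, V S) ∧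
        LieRing.IsNilpotent (L ⧸ I) :=
  graded_kernel_is_ideal_with_nilpotent_quotient_general R V hVhigh hspan hbracket M W hW
end

section
/- Let m ≥ 1, let S be a complex vector space with finrank_ℂ S = 2^m, and let c₁, …, c_{2m} be a Clifford system on S. Set T := Σ_{j=1}^m c_j ∘ c_{m+j}. Then the eigenvalues of T are exactly the numbers μ_l = i·(2l - m) for l = 0, 1, …, m, and for each such l the eigenspace of T for the eigenvalue i·(2l - m) has complex dimension equal to the binomial coefficient (m choose l). -/
/-!
The products `P j = c j * c (m + j)` commute pairwise and square to `-1`, so the products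
`Q s = ∏ j, (1 ∓ I • P j) / 2` (sign `-` for `j ∈ s`) over the subsets `s` of `Fin m` form a
complete family of orthogonal idempotents with `T = ∑ s, I * (2 * #s - m) • Q s`.
Conjugation by `c k` flips the `k`-th factor of `Q s`, so all `Q s` have the same trace; as the
`2 ^ m` traces add up to `dim S = 2 ^ m`, each is `1`. The eigenspace of `T` for `I * (2 * l - m)`
is the range of the idempotent `∑ #s = l, Q s`, whose dimension is its trace `m.choose l`.
-/

open Finset Module Complex
open LinearMap (trace)

section Anticommute

variable {A : Type*} [Ring A] {a x y : A}

theorem commute_mul_of_semiconjBy_neg (hx : SemiconjBy a x (-x)) (hy : SemiconjBy a y (-y)) :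
    Commute a (x * y) := by
  simpa only [Commute, neg_mul_neg] using hx.mul_right hy

theorem semiconjBy_mul_neg_of_semiconjBy_neg (h : SemiconjBy x y (-y)) :
    SemiconjBy x (x * y) (-(x * y)) := by
  simpa only [mul_neg] using SemiconjBy.mul_right (Commute.refl x) h

theorem mul_mul_mul_self_eq_neg_one (hx : x * x = -1) (hy : y * y = -1)
    (h : SemiconjBy y x (-x)) : x * y * (x * y) = -1 := by
  calc x * y * (x * y) = x * (y * x) * y := by simp only [mul_assoc]
    _ = -1 := by rw [h.eq, neg_mul, mul_neg, neg_mul, ← mul_assoc x x y, mul_assoc, hx, hy]; simp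

end Anticommute

theorem semiconjBy_map_prod {M N F ι : Type*} [CommMonoid M] [Monoid N] [FunLike F M N]
    [MonoidHomClass F M N] (φ : F) {u : N} {f g : ι → M} (s : Finset ι)
    (h : ∀ i ∈ s, SemiconjBy u (φ (f i)) (φ (g i))) :
    SemiconjBy u (φ (∏ i ∈ s, f i)) (φ (∏ i ∈ s, g i)) := by
  induction s using Finset.cons_induction with
  | empty => simp
  | cons a s ha ih =>
    simp only [prod_cons, map_mul]
    exact (h a (mem_cons_self a s)).mul_right (ih fun i hi => h i (mem_cons_of_mem hi))

section SignSum

variable {ι : Type*} [DecidableEq ι]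

theorem ite_mem_mul_self (s : Finset ι) (j : ι) :
    (if j ∈ s then I else -I) * (if j ∈ s then I else -I) = -1 := by
  split_ifs <;> simp

theorem sum_ite_mem_I_neg_I [Fintype ι] (s : Finset ι) :
    ∑ j, (if j ∈ s then I else -I) = I * (2 * #s - Fintype.card ι) := by
  rw [← sum_add_sum_compl s, sum_congr rfl fun j hj => if_pos hj,
    sum_congr rfl fun j hj => if_neg (mem_compl.mp hj), sum_const, sum_const, card_compl,
    nsmul_eq_mul, nsmul_eq_mul, Nat.cast_sub (card_le_univ s)]
  ring

end SignSum

section SpectralProj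

variable {R : Type*} [Ring R] [Algebra ℂ R]

/-- For `p * p = -1` and `z * z = -1` this is the projection onto the `z`-eigenspace of `p`. -/
noncomputable def spectralProj (p : R) (z : ℂ) : R := (2 : ℂ)⁻¹ • (1 - z • p)

theorem spectralProj_add_spectralProj_neg (p : R) (z : ℂ) :
    spectralProj p z + spectralProj p (-z) = 1 := by
  unfold spectralProj
  match_scalars <;> ring

theorem map_spectralProj {B F : Type*} [Ring B] [Algebra ℂ B] [FunLike F R B]
    [AlgHomClass F ℂ R B] (φ : F) (p : R) (z : ℂ) :
    φ (spectralProj p z) = spectralProj (φ p) z := by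
  simp [spectralProj]

variable {p u : R} {z : ℂ}

theorem mul_spectralProj (hp : p * p = -1) (hz : z * z = -1) :
    p * spectralProj p z = z • spectralProj p z := by
  unfold spectralProj
  rw [mul_smul_comm, mul_sub, mul_one, mul_smul_comm, hp]
  match_scalars
  · linear_combination (1 / 2 : ℂ) * hz
  · ring

theorem spectralProj_mul_spectralProj (hp : p * p = -1) (hz : z * z = -1) (w : ℂ) :
    spectralProj p w * spectralProj p z = ((2 : ℂ)⁻¹ * (1 - w * z)) • spectralProj p z := by
  conv_lhs => rw [spectralProj, smul_mul_assoc, sub_mul, one_mul, smul_mul_assoc,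
    mul_spectralProj hp hz]
  match_scalars
  ring

theorem spectralProj_mul_self (hp : p * p = -1) (hz : z * z = -1) :
    spectralProj p z * spectralProj p z = spectralProj p z := by
  rw [spectralProj_mul_spectralProj hp hz, hz]
  norm_num

theorem spectralProj_neg_mul_spectralProj (hp : p * p = -1) (hz : z * z = -1) :
    spectralProj p (-z) * spectralProj p z = 0 := by
  rw [spectralProj_mul_spectralProj hp hz, neg_mul, hz]
  simp

theorem SemiconjBy.spectralProj_neg (h : SemiconjBy u p (-p)) :
    SemiconjBy u (spectralProj p z) (spectralProj p (-z)) := by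
  unfold spectralProj
  rw [neg_smul, ← smul_neg]
  exact ((SemiconjBy.one_right u).sub_right (h.smul_right z)).smul_right _

theorem Commute.spectralProj (h : Commute u p) : Commute u (spectralProj p z) :=
  ((Commute.one_right u).sub_right (h.smul_right z)).smul_right _

end SpectralProj

section JointProj

variable {ι R : Type*} [Fintype ι] [DecidableEq ι] [CommRing R] [Algebra ℂ R]

/-- The joint spectral projection of commuting square roots of `-1` onto the simultaneous
eigenspace on which `p j` acts by `I` for `j ∈ s` and by `-I` for `j ∉ s`. -/
noncomputable def jointProj (p : ι → R) (s : Finset ι) : R :=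
  ∏ j, spectralProj (p j) (if j ∈ s then I else -I)

theorem jointProj_eq_prod_mul_prod (p : ι → R) (s : Finset ι) :
    jointProj p s =
      (∏ j ∈ s, spectralProj (p j) I) * ∏ j ∈ sᶜ, spectralProj (p j) (-I) := by
  rw [jointProj, ← prod_mul_prod_compl s]
  congr 1
  · exact prod_congr rfl fun j hj => by rw [if_pos hj]
  · exact prod_congr rfl fun j hj => by rw [if_neg (mem_compl.mp hj)]

theorem sum_jointProj (p : ι → R) : ∑ s, jointProj p s = 1 := by
  simp_rw [jointProj_eq_prod_mul_prod, ← Fintype.prod_add, spectralProj_add_spectralProj_neg,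
    prod_const_one]

variable {p : ι → R} (hp : ∀ j, p j * p j = -1)
include hp

theorem completeOrthogonalIdempotents_jointProj :
    CompleteOrthogonalIdempotents (jointProj p) where
  idem s := by
    rw [IsIdempotentElem, jointProj, ← prod_mul_distrib]
    exact prod_congr rfl fun j _ => spectralProj_mul_self (hp j) (ite_mem_mul_self s j)
  ortho s t hst := by
    obtain ⟨j, hj⟩ : ∃ j, ¬(j ∈ s ↔ j ∈ t) := by
      by_contra! h
      exact hst (Finset.ext h)
    have hneg : (if j ∈ s then I else -I) = -(if j ∈ t then I else -I) := by
      by_cases hs : j ∈ s <;> by_cases ht : j ∈ t <;> simp_all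
    rw [jointProj, jointProj, ← prod_mul_distrib]
    refine prod_eq_zero (mem_univ j) ?_
    rw [hneg]
    exact spectralProj_neg_mul_spectralProj (hp j) (ite_mem_mul_self t j)
  complete := sum_jointProj p

theorem mul_jointProj (j : ι) (s : Finset ι) :
    p j * jointProj p s = (if j ∈ s then I else -I) • jointProj p s := by
  rw [jointProj, ← mul_prod_erase univ _ (mem_univ j), ← mul_assoc,
    mul_spectralProj (hp j) (ite_mem_mul_self s j), smul_mul_assoc]

theorem sum_mul_jointProj (s : Finset ι) :
    (∑ j, p j) * jointProj p s = (I * (2 * #s - Fintype.card ι)) • jointProj p s := by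
  rw [sum_mul, sum_congr rfl fun j _ => mul_jointProj hp j s, ← sum_smul,
    sum_ite_mem_I_neg_I]

theorem sum_eq_sum_smul_jointProj :
    ∑ j, p j = ∑ s, (I * (2 * #s - Fintype.card ι)) • jointProj p s := by
  conv_lhs => rw [← mul_one (∑ j, p j), ← sum_jointProj p, mul_sum]
  exact sum_congr rfl fun s _ => sum_mul_jointProj hp s

omit hp in
theorem semiconjBy_map_jointProj_insert {A F : Type*} [Ring A] [Algebra ℂ A] [FunLike F R A]
    [AlgHomClass F ℂ R A] (φ : F) {u : A} {a : ι} (hua : SemiconjBy u (φ (p a)) (-φ (p a)))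
    (hu : ∀ j ≠ a, Commute u (φ (p j))) {s : Finset ι} (ha : a ∉ s) :
    SemiconjBy u (φ (jointProj p s)) (φ (jointProj p (insert a s))) := by
  refine semiconjBy_map_prod φ univ fun j _ => ?_
  rw [map_spectralProj, map_spectralProj]
  by_cases hj : j = a
  · subst hj
    simpa [ha] using hua.spectralProj_neg (z := -I)
  · simp only [mem_insert, hj, false_or]
    exact (hu j hj).spectralProj

end JointProj

section Trace

variable {K V : Type*} [Field K] [AddCommGroup V] [Module K V]

theorem LinearMap.trace_eq_of_semiconjBy {u x y : Module.End K V} (hu : IsUnit u)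
    (h : SemiconjBy u x y) : trace K V y = trace K V x := by
  obtain ⟨u, rfl⟩ := hu
  rw [← LinearMap.trace_conj (g := x) (f := u), h.eq, mul_assoc, Units.mul_inv, mul_one]

theorem trace_eq_one_of_semiconjBy_insert [CharZero K] [FiniteDimensional K V] {ι : Type*}
    [Fintype ι] [DecidableEq ι] {Q : Finset ι → Module.End K V}
    (hQ : CompleteOrthogonalIdempotents Q) (hdim : finrank K V = 2 ^ Fintype.card ι)
    {u : ι → Module.End K V} (hu : ∀ a, IsUnit (u a))
    (hconj : ∀ a s, a ∉ s → SemiconjBy (u a) (Q s) (Q (insert a s))) (s : Finset ι) :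
    trace K V (Q s) = 1 := by
  have hconst : ∀ s, trace K V (Q s) = trace K V (Q ∅) := by
    intro s
    induction s using Finset.induction with
    | empty => rfl
    | insert a s ha ih => rw [LinearMap.trace_eq_of_semiconjBy (hu a) (hconj a s ha), ih]
  have hsum : (2 : K) ^ Fintype.card ι * trace K V (Q ∅) = 2 ^ Fintype.card ι := by
    have := congrArg (trace K V) hQ.complete
    rw [map_sum, sum_congr rfl fun s _ => hconst s, sum_const, card_univ, Fintype.card_finset,
      LinearMap.trace_one, hdim, nsmul_eq_mul] at this
    exact_mod_cast this
  rw [hconst]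
  exact (mul_right_eq_self₀.mp hsum).resolve_right (pow_ne_zero _ two_ne_zero)

variable [DecidableEq K] {σ : Type*} [Fintype σ] {Q : σ → Module.End K V} {μ : σ → K}
  {T : Module.End K V}

theorem eigenspace_eq_range_sum (hQ : CompleteOrthogonalIdempotents Q)
    (hT : T = ∑ s, μ s • Q s) (ν : K) :
    T.eigenspace ν = LinearMap.range (∑ s ∈ {s | μ s = ν}, Q s) := by
  classical
  have hQT : ∀ s, Q s * T = μ s • Q s := fun s => by
    simp [hT, mul_sum, hQ.mul_eq]
  have hTQ : ∀ s, T * Q s = μ s • Q s := fun s => by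
    simp [hT, sum_mul, hQ.mul_eq]
  ext v
  constructor
  · intro hv
    rw [Module.End.mem_eigenspace_iff] at hv
    have hvanish : ∀ s, μ s ≠ ν → Q s v = 0 := fun s hs => by
      have : (μ s - ν) • Q s v = 0 := by
        rw [sub_smul, ← LinearMap.smul_apply, ← hQT, Module.End.mul_apply, hv, map_smul,
          sub_self]
      exact (smul_eq_zero.mp this).resolve_left (sub_ne_zero.mpr hs)
    refine ⟨v, ?_⟩
    rw [LinearMap.sum_apply, sum_filter_of_ne fun s _ h => not_imp_comm.mp (hvanish s) h,
      ← LinearMap.sum_apply, hQ.complete, Module.End.one_apply]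
  · rintro ⟨w, rfl⟩
    have hE : T * ∑ s ∈ {s | μ s = ν}, Q s = ν • ∑ s ∈ {s | μ s = ν}, Q s := by
      rw [mul_sum, smul_sum]
      exact sum_congr rfl fun s hs => by rw [hTQ, (mem_filter.mp hs).2]
    rw [Module.End.mem_eigenspace_iff, ← Module.End.mul_apply, hE, LinearMap.smul_apply]

variable [CharZero K] [FiniteDimensional K V]

theorem finrank_eigenspace_eq_card (hQ : CompleteOrthogonalIdempotents Q)
    (htr : ∀ s, trace K V (Q s) = 1) (hT : T = ∑ s, μ s • Q s) (ν : K) :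
    finrank K (T.eigenspace ν) = #{s | μ s = ν} := by
  have hE : IsIdempotentElem (∑ s ∈ {s | μ s = ν}, Q s) := hQ.isIdempotentElem_sum
  apply Nat.cast_injective (R := K)
  rw [eigenspace_eq_range_sum hQ hT, ← (LinearMap.IsIdempotentElem.isProj_range _ hE).trace,
    map_sum, sum_congr rfl fun s _ => htr s]
  simp

theorem hasEigenvalue_iff_exists_eq (hQ : CompleteOrthogonalIdempotents Q)
    (htr : ∀ s, trace K V (Q s) = 1) (hT : T = ∑ s, μ s • Q s) (ν : K) :
    T.HasEigenvalue ν ↔ ∃ s, μ s = ν := by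
  rw [Module.End.hasEigenvalue_iff, Ne, ← Submodule.finrank_eq_zero,
    finrank_eigenspace_eq_card hQ htr hT, card_eq_zero, filter_eq_empty_iff]
  simp

end Trace

section CliffordSystem

variable {A : Type*} [Ring A] {m : ℕ} {c : ℕ → A}
  (hsq : ∀ j < 2 * m, c j * c j = -1)
  (hanti : ∀ j < 2 * m, ∀ k < 2 * m, j ≠ k → c j * c k + c k * c j = 0)

include hanti

theorem clifford_semiconjBy_neg {j k : ℕ} (hj : j < 2 * m) (hk : k < 2 * m) (hjk : j ≠ k) :
    SemiconjBy (c j) (c k) (-c k) := by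
  rw [SemiconjBy, neg_mul]
  exact eq_neg_of_add_eq_zero_left (hanti j hj k hk hjk)

theorem commute_clifford_pair {a j : ℕ} (ha : a < 2 * m) (hj : j < m) (haj : a ≠ j)
    (hamj : a ≠ m + j) : Commute (c a) (c j * c (m + j)) :=
  commute_mul_of_semiconjBy_neg (clifford_semiconjBy_neg hanti ha (by omega) haj)
    (clifford_semiconjBy_neg hanti ha (by omega) hamj)

theorem semiconjBy_clifford_pair {j : ℕ} (hj : j < m) :
    SemiconjBy (c j) (c j * c (m + j)) (-(c j * c (m + j))) :=
  semiconjBy_mul_neg_of_semiconjBy_neg (clifford_semiconjBy_neg hanti (by omega) (by omega)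
    (by omega))

theorem commute_clifford_pairs {j k : ℕ} (hj : j < m) (hk : k < m) :
    Commute (c j * c (m + j)) (c k * c (m + k)) := by
  rcases eq_or_ne j k with rfl | hjk
  · exact Commute.refl _
  · exact ((commute_clifford_pair hanti (by omega) hj hjk.symm (by omega)).mul_left
      (commute_clifford_pair hanti (by omega) hj (by omega) (by omega))).symm

include hsq

theorem clifford_pair_mul_self {j : ℕ} (hj : j < m) :
    c j * c (m + j) * (c j * c (m + j)) = -1 :=
  mul_mul_mul_self_eq_neg_one (hsq j (by omega)) (hsq (m + j) (by omega))
    (clifford_semiconjBy_neg hanti (by omega) (by omega) (by omega))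

open scoped IsMulCommutative in
theorem exists_completeOrthogonalIdempotents_of_clifford [Algebra ℂ A] :
    ∃ Q : Finset (Fin m) → A, CompleteOrthogonalIdempotents Q ∧
      ∑ j ∈ range m, c j * c (m + j) = ∑ s, (I * (2 * #s - m)) • Q s ∧
      ∀ (a : Fin m) s, a ∉ s → SemiconjBy (c a) (Q s) (Q (insert a s)) := by
  let P : Fin m → A := fun j => c j * c (m + j)
  have : IsMulCommutative (Algebra.adjoin ℂ (Set.range P)) :=
    Algebra.isMulCommutative_adjoin ℂ <| by
      rintro _ ⟨j, rfl⟩ _ ⟨k, rfl⟩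
      exact commute_clifford_pairs hanti j.2 k.2
  let p : Fin m → Algebra.adjoin ℂ (Set.range P) :=
    fun j => ⟨P j, Algebra.subset_adjoin ⟨j, rfl⟩⟩
  have hp : ∀ j, p j * p j = -1 := fun j => Subtype.ext (clifford_pair_mul_self hsq hanti j.2)
  let φ := (Algebra.adjoin ℂ (Set.range P)).val
  refine ⟨φ ∘ jointProj p, (completeOrthogonalIdempotents_jointProj hp).map φ.toRingHom, ?_,
    fun a s ha => semiconjBy_map_jointProj_insert φ (semiconjBy_clifford_pair hanti a.2)
      (fun j hj => commute_clifford_pair hanti (by omega) j.2 (fun h => hj (Fin.ext h).symm)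
        (by omega)) ha⟩
  have := congrArg φ (sum_eq_sum_smul_jointProj hp)
  simp only [map_sum, map_smul, Fintype.card_fin] at this
  rw [← Fin.sum_univ_eq_sum_range (fun j => c j * c (m + j))]
  exact this

end CliffordSystem

theorem I_mul_two_mul_sub_injective (m : ℕ) :
    Function.Injective fun l : ℕ => I * (2 * (l : ℂ) - m) := by
  intro a b h
  simpa using h

theorem clifford_sum_eigenvalues_and_multiplicities_general
    {S : Type*} [AddCommGroup S] [Module ℂ S]
    (m : ℕ) (hdim : Module.finrank ℂ S = 2 ^ m)
    (c : ℕ → Module.End ℂ S)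
    (hsq : ∀ j < 2 * m, c j * c j = -1)
    (hanti : ∀ j < 2 * m, ∀ k < 2 * m, j ≠ k → c j * c k + c k * c j = 0) :
    (∀ μ : ℂ, (∑ j ∈ Finset.range m, c j * c (m + j)).HasEigenvalue μ ↔
        ∃ l : ℕ, l ≤ m ∧ μ = Complex.I * (2 * (l : ℂ) - (m : ℂ))) ∧
    ∀ l : ℕ, l ≤ m →
      Module.finrank ℂ
          ((∑ j ∈ Finset.range m, c j * c (m + j)).eigenspace
            (Complex.I * (2 * (l : ℂ) - (m : ℂ)))) = m.choose l := by
  have : FiniteDimensional ℂ S := Module.finite_of_finrank_pos (by rw [hdim]; positivity)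
  obtain ⟨Q, hQ, hT, hconj⟩ := exists_completeOrthogonalIdempotents_of_clifford hsq hanti
  have hunit : ∀ a : Fin m, IsUnit (c a) := fun a =>
    ⟨⟨c a, -c a, by rw [mul_neg, hsq a (by omega), neg_neg],
      by rw [neg_mul, hsq a (by omega), neg_neg]⟩, rfl⟩
  have htr := trace_eq_one_of_semiconjBy_insert hQ (by rw [hdim, Fintype.card_fin]) hunit hconj
  have hinj := I_mul_two_mul_sub_injective m
  refine ⟨fun μ => ?_, fun l hl => ?_⟩
  · rw [hasEigenvalue_iff_exists_eq hQ htr hT]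
    constructor
    · rintro ⟨s, rfl⟩
      exact ⟨#s, by simpa using card_le_univ s, rfl⟩
    · rintro ⟨l, hl, rfl⟩
      obtain ⟨s, -, hs⟩ :=
        exists_subset_card_eq (s := (univ : Finset (Fin m))) (by simpa using hl)
      exact ⟨s, by rw [hs]⟩
  · rw [finrank_eigenspace_eq_card hQ htr hT, filter_congr fun s _ => hinj.eq_iff,
      ← powerset_univ, ← powersetCard_eq_filter, card_powersetCard, card_univ, Fintype.card_fin]

theorem clifford_sum_eigenvalues_and_multiplicities
    {S : Type*} [AddCommGroup S] [Module ℂ S] [FiniteDimensional ℂ S]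
    (m : ℕ) (hm : 1 ≤ m) (hdim : Module.finrank ℂ S = 2 ^ m)
    (c : ℕ → Module.End ℂ S)
    (hsq : ∀ j < 2 * m, c j * c j = -1)
    (hanti : ∀ j < 2 * m, ∀ k < 2 * m, j ≠ k → c j * c k + c k * c j = 0) :
    (∀ μ : ℂ, (∑ j ∈ Finset.range m, c j * c (m + j)).HasEigenvalue μ ↔
        ∃ l : ℕ, l ≤ m ∧ μ = Complex.I * (2 * (l : ℂ) - (m : ℂ))) ∧
    ∀ l : ℕ, l ≤ m →
      Module.finrank ℂ
          ((∑ j ∈ Finset.range m, c j * c (m + j)).eigenspace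
            (Complex.I * (2 * (l : ℂ) - (m : ℂ)))) = m.choose l :=
  clifford_sum_eigenvalues_and_multiplicities_general m hdim c hsq hanti
end

section
/- Let m ≥ 1, let S be a nonzero finite-dimensional complex vector space, let c₁, …, c_{2m} be a Clifford system on S, and let λ₁, …, λ_m be positive real numbers. Set T := Σ_{j=1}^m λ_j · (c_j ∘ c_{m+j}). Then every eigenvalue μ of T is purely imaginary with |Im μ| ≤ Σ_{j=1}^m λ_j, and both of the numbers i·Σ_{j=1}^m λ_j and -i·Σ_{j=1}^m λ_j are eigenvalues of T. -/
/-! Write `A j = c j * c (m + j)`. The `A j` square to `-1` and commute pairwise, so every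
eigenspace of `T = ∑ λ_j A_j` contains a common eigenvector of all `A j`, with eigenvalues `±i`;
hence every eigenvalue of `T` has the form `i ∑ ±λ_j`. Conversely `c k` anticommutes with `A k`
and commutes with the other `A j`, so applying `c k` to a common eigenvector flips the sign of the
`k`-th eigenvalue only. Flipping suitable signs gives common eigenvectors on which every `A j`
acts by `i`, or every `A j` by `-i`, and these are eigenvectors of `T` for `±i ∑ λ_j`. -/

open Module Finset

section AnticommutingElements

variable {R : Type*} [Ring R] {a b d : R}

theorem mul_mul_self_eq_neg_one_of_anticomm (ha : a * a = -1) (hb : b * b = -1)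
    (hab : a * b = -(b * a)) : a * b * (a * b) = -1 := by
  have hba : b * a = -(a * b) := by rw [hab, neg_neg]
  calc a * b * (a * b) = a * (b * a) * b := by simp only [mul_assoc]
    _ = -(a * a * (b * b)) := by rw [hba]; noncomm_ring
    _ = -1 := by rw [ha, hb]; norm_num

theorem commute_mul_of_anticomm (hab : a * b = -(b * a)) (had : a * d = -(d * a)) :
    Commute a (b * d) := by
  rw [Commute, SemiconjBy, ← mul_assoc, hab, neg_mul, mul_assoc, had, mul_neg, neg_neg,
    mul_assoc]

theorem mul_mul_eq_neg_mul_mul_of_anticomm (hab : a * b = -(b * a)) :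
    a * b * a = -(a * (a * b)) := by
  rw [mul_assoc, ← neg_neg (b * a), ← hab, mul_neg]

end AnticommutingElements

structure IsCliffordSystem {R : Type*} [Ring R] (c : ℕ → R) (n : ℕ) : Prop where
  mul_self : ∀ j < n, c j * c j = -1
  anticomm : ∀ j < n, ∀ k < n, j ≠ k → c j * c k + c k * c j = 0

namespace IsCliffordSystem

variable {R : Type*} [Ring R] {c : ℕ → R} {n m : ℕ}

theorem mul_eq_neg (hc : IsCliffordSystem c n) {j k : ℕ} (hj : j < n) (hk : k < n)
    (hjk : j ≠ k) : c j * c k = -(c k * c j) :=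
  eq_neg_of_add_eq_zero_left (hc.anticomm j hj k hk hjk)

variable {j k : ℕ}

theorem pair_mul_self (hc : IsCliffordSystem c (2 * m)) (hj : j < m) :
    c j * c (m + j) * (c j * c (m + j)) = -1 :=
  mul_mul_self_eq_neg_one_of_anticomm (hc.mul_self j (by omega))
    (hc.mul_self (m + j) (by omega))
    (hc.mul_eq_neg (by omega) (by omega) (by omega))

theorem pair_mul_gen (hc : IsCliffordSystem c (2 * m)) (hj : j < m) :
    c j * c (m + j) * c j = -(c j * (c j * c (m + j))) :=
  mul_mul_eq_neg_mul_mul_of_anticomm (hc.mul_eq_neg (by omega) (by omega) (by omega))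

theorem commute_gen_pair (hc : IsCliffordSystem c (2 * m)) (hj : j < m) (hk : k < 2 * m)
    (hkj : k ≠ j) (hkmj : k ≠ m + j) : Commute (c k) (c j * c (m + j)) :=
  commute_mul_of_anticomm (hc.mul_eq_neg hk (by omega) hkj) (hc.mul_eq_neg hk (by omega) hkmj)

theorem commute_pair_pair (hc : IsCliffordSystem c (2 * m)) (hj : j < m) (hk : k < m) :
    Commute (c j * c (m + j)) (c k * c (m + k)) := by
  rcases eq_or_ne j k with rfl | hjk
  · exact Commute.refl _
  · exact ((hc.commute_gen_pair hj (by omega) hjk.symm (by omega)).mul_left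
      (hc.commute_gen_pair hj (by omega) (by omega) (by omega))).symm

end IsCliffordSystem

namespace Module.End

section Ring

variable {R V ι : Type*} [Ring R] [AddCommGroup V] [Module R V]

theorem injective_of_mul_self_eq_neg_one {f : End R V} (hf : f * f = -1) :
    Function.Injective f :=
  Function.LeftInverse.injective (g := -f) fun x => by
    simpa using congrArg (fun g : End R V => -g x) hf

theorem exists_joint_eigenvector_neg_on [DecidableEq ι] (A F : ι → End R V) {s : Finset ι}
    {χ : ι → R} {v : V} (hv : v ≠ 0) (hvχ : ∀ i ∈ s, A i v = χ i • v) (t : Finset ι)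
    (hF : ∀ k ∈ t, Function.Injective (F k)) (hAF : ∀ k ∈ t, A k * F k = -(F k * A k))
    (hcomm : ∀ k ∈ t, ∀ i ∈ s, i ≠ k → Commute (A i) (F k)) :
    ∃ w ≠ 0, ∀ i ∈ s, A i w = (if i ∈ t then -χ i else χ i) • w := by
  induction t using Finset.induction_on with
  | empty => exact ⟨v, hv, by simpa using hvχ⟩
  | @insert k t hkt ih =>
    obtain ⟨w, hw, hwχ⟩ := ih (fun k hk => hF k (mem_insert_of_mem hk))
      (fun k hk => hAF k (mem_insert_of_mem hk))
      (fun k hk => hcomm k (mem_insert_of_mem hk))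
    refine ⟨F k w, (map_ne_zero_iff _ (hF k (mem_insert_self k t))).mpr hw, fun i hi => ?_⟩
    rcases eq_or_ne i k with rfl | hik
    · have := congrArg (· w) (hAF i (mem_insert_self i t))
      simp only [mul_apply, LinearMap.neg_apply] at this
      rw [this, hwχ i hi, map_smul, if_neg hkt, if_pos (mem_insert_self i t), neg_smul]
    · have := (hcomm k (mem_insert_self k t) i hi hik).eq
      rw [← mul_apply, this, mul_apply, hwχ i hi, map_smul]
      simp [hik]

theorem exists_joint_eigenvector_of_forall_eq_or_eq_neg (A F : ι → End R V) {s : Finset ι}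
    {χ τ : ι → R} {v : V} (hv : v ≠ 0) (hvχ : ∀ i ∈ s, A i v = χ i • v)
    (hτ : ∀ i ∈ s, τ i = χ i ∨ τ i = -χ i)
    (hF : ∀ k ∈ s, Function.Injective (F k)) (hAF : ∀ k ∈ s, A k * F k = -(F k * A k))
    (hcomm : ∀ k ∈ s, ∀ i ∈ s, i ≠ k → Commute (A i) (F k)) :
    ∃ w ≠ 0, ∀ i ∈ s, A i w = τ i • w := by
  classical
  set t := s.filter fun i => τ i ≠ χ i
  have ht : t ⊆ s := filter_subset _ _
  obtain ⟨w, hw, hwχ⟩ := exists_joint_eigenvector_neg_on A F hv hvχ t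
    (fun k hk => hF k (ht hk)) (fun k hk => hAF k (ht hk)) (fun k hk => hcomm k (ht hk))
  refine ⟨w, hw, fun i hi => ?_⟩
  rw [hwχ i hi]
  by_cases hi' : τ i = χ i
  · rw [if_neg (by simp [t, hi']), hi']
  · rw [if_pos (by simp [t, hi, hi']), (hτ i hi).resolve_left hi']

end Ring

theorem sum_smul_apply_of_joint_eigenvector {R V ι : Type*} [CommRing R] [AddCommGroup V]
    [Module R V] (A : ι → End R V) (s : Finset ι) (a : ι → R) {χ : ι → R} {v : V}
    (hvχ : ∀ i ∈ s, A i v = χ i • v) :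
    (∑ i ∈ s, a i • A i) v = (∑ i ∈ s, a i * χ i) • v := by
  rw [LinearMap.sum_apply, sum_smul]
  exact sum_congr rfl fun i hi => by rw [LinearMap.smul_apply, hvχ i hi, smul_smul]

theorem exists_joint_eigenvector {K V ι : Type*} [Field K] [IsAlgClosed K] [AddCommGroup V]
    [Module K V] [FiniteDimensional K V] (A : ι → End K V) (s : Finset ι)
    (hcomm : ∀ i ∈ s, ∀ j ∈ s, Commute (A i) (A j)) {p : Submodule K V} (hp : p ≠ ⊥)
    (hmaps : ∀ i ∈ s, ∀ v ∈ p, A i v ∈ p) :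
    ∃ χ : ι → K, ∃ v ∈ p, v ≠ 0 ∧ ∀ i ∈ s, A i v = χ i • v := by
  classical
  induction s using Finset.induction_on generalizing p with
  | empty =>
    obtain ⟨v, hvp, hv⟩ := Submodule.exists_mem_ne_zero_of_ne_bot hp
    exact ⟨0, v, hvp, hv, by simp⟩
  | @insert k s _ ih =>
    have : Nontrivial p := Submodule.nontrivial_iff_ne_bot.mpr hp
    obtain ⟨μ, hμ⟩ := exists_eigenvalue ((A k).restrict (hmaps k (mem_insert_self k s)))
    obtain ⟨x, hx⟩ := hμ.exists_hasEigenvector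
    set q := p ⊓ (A k).eigenspace μ
    have hxq : (x : V) ∈ q := ⟨x.2, by
      simpa [mem_eigenspace_iff, LinearMap.restrict_apply, Subtype.ext_iff] using hx.apply_eq_smul⟩
    have hq : q ≠ ⊥ := fun h => hx.2 (by simpa [h] using hxq)
    have hqmaps : ∀ i ∈ s, ∀ v ∈ q, A i v ∈ q := fun i hi v hv =>
      ⟨hmaps i (mem_insert_of_mem hi) v hv.1,
        mapsTo_genEigenspace_of_comm (hcomm k (mem_insert_self k s) i (mem_insert_of_mem hi)) μ 1
          hv.2⟩
    obtain ⟨χ, v, hvq, hv, hvχ⟩ := ih (fun i hi j hj =>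
      hcomm i (mem_insert_of_mem hi) j (mem_insert_of_mem hj)) hq hqmaps
    refine ⟨Function.update χ k μ, v, hvq.1, hv, fun i hi => ?_⟩
    rcases eq_or_ne i k with rfl | hik
    · simpa [mem_eigenspace_iff] using hvq.2
    · rw [Function.update_of_ne hik, hvχ i ((mem_insert.mp hi).resolve_left hik)]

theorem exists_joint_eigenvector_of_hasEigenvalue_sum_smul {K V ι : Type*} [Field K]
    [IsAlgClosed K] [AddCommGroup V] [Module K V] [FiniteDimensional K V] (A : ι → End K V)
    (s : Finset ι) (a : ι → K) (hcomm : ∀ i ∈ s, ∀ j ∈ s, Commute (A i) (A j)) {μ : K}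
    (hμ : (∑ i ∈ s, a i • A i).HasEigenvalue μ) :
    ∃ χ : ι → K, ∃ v ≠ 0, (∀ i ∈ s, A i v = χ i • v) ∧ μ = ∑ i ∈ s, a i * χ i := by
  have hTA : ∀ j ∈ s, Commute (∑ i ∈ s, a i • A i) (A j) := fun j hj =>
    Commute.sum_left _ _ _ fun i hi => (hcomm i hi j hj).smul_left _
  obtain ⟨χ, v, hvμ, hv, hvχ⟩ := exists_joint_eigenvector A s hcomm hμ
    fun j hj _ hv => mapsTo_genEigenspace_of_comm (hTA j hj) μ 1 hv
  refine ⟨χ, v, hv, hvχ, smul_left_injective K hv ?_⟩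
  exact (mem_eigenspace_iff.mp hvμ).symm.trans (sum_smul_apply_of_joint_eigenvector A _ _ hvχ)

theorem eq_I_or_eq_neg_I_of_mul_self_eq_neg_one {V : Type*} [AddCommGroup V] [Module ℂ V]
    {f : End ℂ V} (hf : f * f = -1) {ν : ℂ} {v : V} (hv : v ≠ 0) (hvν : f v = ν • v) :
    ν = Complex.I ∨ ν = -Complex.I := by
  have hff : f (f v) = -v := by simpa using congrArg (· v) hf
  rw [hvν, map_smul, hvν, smul_smul, ← neg_one_smul ℂ v] at hff
  rw [← sq_eq_sq_iff_eq_or_eq_neg, Complex.I_sq, sq]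
  exact smul_left_injective ℂ hv hff

end Module.End

theorem Complex.re_sum_eq_zero_and_abs_im_sum_le {ι : Type*} (s : Finset ι) {lam : ι → ℝ}
    (hlam : ∀ i ∈ s, 0 ≤ lam i) {ν : ι → ℂ} (hν : ∀ i ∈ s, ν i = I ∨ ν i = -I) :
    (∑ i ∈ s, (lam i : ℂ) * ν i).re = 0 ∧ |(∑ i ∈ s, (lam i : ℂ) * ν i).im| ≤ ∑ i ∈ s, lam i := by
  constructor
  · rw [re_sum]
    exact sum_eq_zero fun i hi => by rcases hν i hi with h | h <;> simp [h]
  · rw [im_sum]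
    refine (abs_sum_le_sum_abs _ _).trans (sum_le_sum fun i hi => ?_)
    rcases hν i hi with h | h <;> simp [h, abs_of_nonneg (hlam i hi)]

namespace IsCliffordSystem

open Module.End

variable {S : Type*} [AddCommGroup S] [Module ℂ S] {c : ℕ → End ℂ S} {m : ℕ}

theorem commute_pairs (hc : IsCliffordSystem c (2 * m)) :
    ∀ i ∈ range m, ∀ j ∈ range m, Commute (c i * c (m + i)) (c j * c (m + j)) :=
  fun _ hi _ hj => hc.commute_pair_pair (mem_range.mp hi) (mem_range.mp hj)

theorem pair_eigenvalue_eq_I_or_eq_neg_I (hc : IsCliffordSystem c (2 * m)) {j : ℕ} (hj : j < m)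
    {ν : ℂ} {v : S} (hv : v ≠ 0) (hvν : (c j * c (m + j)) v = ν • v) :
    ν = Complex.I ∨ ν = -Complex.I :=
  eq_I_or_eq_neg_I_of_mul_self_eq_neg_one (hc.pair_mul_self hj) hv hvν

theorem exists_pair_eigenvector [FiniteDimensional ℂ S] [Nontrivial S]
    (hc : IsCliffordSystem c (2 * m)) {σ : ℂ} (hσ : σ = Complex.I ∨ σ = -Complex.I) :
    ∃ w ≠ 0, ∀ j ∈ range m, (c j * c (m + j)) w = σ • w := by
  obtain ⟨χ, v, -, hv, hvχ⟩ := exists_joint_eigenvector _ (range m) hc.commute_pairs (p := ⊤)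
    top_ne_bot fun _ _ _ _ => Submodule.mem_top
  refine exists_joint_eigenvector_of_forall_eq_or_eq_neg _ c (τ := fun _ => σ) hv hvχ
    (fun j hj => ?_)
    (fun k hk => injective_of_mul_self_eq_neg_one (hc.mul_self k (by rw [mem_range] at hk; omega)))
    (fun k hk => hc.pair_mul_gen (mem_range.mp hk))
    (fun k hk i hi hik => (hc.commute_gen_pair (mem_range.mp hi) (by rw [mem_range] at hk; omega)
      (Ne.symm hik) (by rw [mem_range] at hi hk; omega)).symm)
  rcases hσ with rfl | rfl <;>
    rcases hc.pair_eigenvalue_eq_I_or_eq_neg_I (mem_range.mp hj) hv (hvχ j hj) with h | h <;>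
    simp [h]

end IsCliffordSystem

open Module.End in
theorem weighted_clifford_sum_eigenvalues_general
    {S : Type*} [AddCommGroup S] [Module ℂ S] [FiniteDimensional ℂ S] [Nontrivial S]
    (m : ℕ) (c : ℕ → Module.End ℂ S)
    (hsq : ∀ j < 2 * m, c j * c j = -1)
    (hanti : ∀ j < 2 * m, ∀ k < 2 * m, j ≠ k → c j * c k + c k * c j = 0)
    (lam : ℕ → ℝ) (hlam : ∀ j < m, 0 < lam j) :
    (∀ μ : ℂ,
        (∑ j ∈ Finset.range m, (lam j : ℂ) • (c j * c (m + j))).HasEigenvalue μ →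
          μ.re = 0 ∧ |μ.im| ≤ ∑ j ∈ Finset.range m, lam j) ∧
    (∑ j ∈ Finset.range m, (lam j : ℂ) • (c j * c (m + j))).HasEigenvalue
        (Complex.I * ((∑ j ∈ Finset.range m, lam j : ℝ) : ℂ)) ∧
    (∑ j ∈ Finset.range m, (lam j : ℂ) • (c j * c (m + j))).HasEigenvalue
        (-(Complex.I * ((∑ j ∈ Finset.range m, lam j : ℝ) : ℂ))) := by
  have hc : IsCliffordSystem c (2 * m) := ⟨hsq, hanti⟩
  have hasEigenvalue_of_pair_eigenvector : ∀ σ : ℂ, σ = Complex.I ∨ σ = -Complex.I →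
      (∑ j ∈ range m, (lam j : ℂ) • (c j * c (m + j))).HasEigenvalue
        (σ * ((∑ j ∈ range m, lam j : ℝ) : ℂ)) := fun σ hσ => by
    obtain ⟨w, hw, hwσ⟩ := hc.exists_pair_eigenvector hσ
    refine hasEigenvalue_of_hasEigenvector ⟨mem_eigenspace_iff.mpr ?_, hw⟩
    rw [sum_smul_apply_of_joint_eigenvector _ _ _ hwσ, ← sum_mul, mul_comm]
    push_cast
    rfl
  refine ⟨fun μ hμ => ?_, hasEigenvalue_of_pair_eigenvector _ (Or.inl rfl), ?_⟩
  · obtain ⟨χ, v, hv, hvχ, rfl⟩ := exists_joint_eigenvector_of_hasEigenvalue_sum_smul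
      (fun j => c j * c (m + j)) _ _ hc.commute_pairs hμ
    exact Complex.re_sum_eq_zero_and_abs_im_sum_le _ (fun j hj => (hlam j (mem_range.mp hj)).le)
      fun j hj => hc.pair_eigenvalue_eq_I_or_eq_neg_I (mem_range.mp hj) hv (hvχ j hj)
  · simpa using hasEigenvalue_of_pair_eigenvector _ (Or.inr rfl)

theorem weighted_clifford_sum_eigenvalues
    {S : Type*} [AddCommGroup S] [Module ℂ S] [FiniteDimensional ℂ S] [Nontrivial S]
    (m : ℕ) (hm : 1 ≤ m) (c : ℕ → Module.End ℂ S)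
    (hsq : ∀ j < 2 * m, c j * c j = -1)
    (hanti : ∀ j < 2 * m, ∀ k < 2 * m, j ≠ k → c j * c k + c k * c j = 0)
    (lam : ℕ → ℝ) (hlam : ∀ j < m, 0 < lam j) :
    (∀ μ : ℂ,
        (∑ j ∈ Finset.range m, (lam j : ℂ) • (c j * c (m + j))).HasEigenvalue μ →
          μ.re = 0 ∧ |μ.im| ≤ ∑ j ∈ Finset.range m, lam j) ∧
    (∑ j ∈ Finset.range m, (lam j : ℂ) • (c j * c (m + j))).HasEigenvalue
        (Complex.I * ((∑ j ∈ Finset.range m, lam j : ℝ) : ℂ)) ∧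
    (∑ j ∈ Finset.range m, (lam j : ℂ) • (c j * c (m + j))).HasEigenvalue
        (-(Complex.I * ((∑ j ∈ Finset.range m, lam j : ℝ) : ℂ))) :=
  weighted_clifford_sum_eigenvalues_general m c hsq hanti lam hlam
end

section
/- Let m be a natural number with m ≥ 1 and let p be a real number. Then the family over pairs of positive natural numbers (τ, k) ∈ ℕ⁺ × ℕ⁺ given by (τ, k) ↦ τ^m · (τ^(1/2) · k^(1/(2m)))^(-p) (real powers of positive reals) is summable if and only if p > 2m + 2. -/
/-! The summand factors as `τ ^ (m - p/2) * k ^ (-p/(2m))`, a product of positive functions of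
`τ` and of `k` alone, so the double series converges iff both `p`-series do: `m - p/2 < -1` and
`p/(2m) > 1`. For `m ≥ 1` the first condition implies the second. -/

theorem Real.summable_pnat_rpow_iff (r : ℝ) :
    Summable (fun n : ℕ+ => (n : ℝ) ^ r) ↔ r < -1 :=
  summable_pnat_iff_summable_nat.trans Real.summable_nat_rpow

theorem summable_prod_mul_iff_of_nonneg {α β : Type*} {f : α → ℝ} {g : β → ℝ}
    (hf : 0 ≤ f) (hg : 0 ≤ g) (hf0 : f ≠ 0) (hg0 : g ≠ 0) :
    Summable (fun z : α × β => f z.1 * g z.2) ↔ Summable f ∧ Summable g := by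
  refine ⟨fun h => ⟨?_, ?_⟩, fun ⟨hsf, hsg⟩ => hsf.mul_of_nonneg hsg hf hg⟩
  · obtain ⟨j, hj⟩ := Function.ne_iff.mp hg0
    exact (summable_mul_right_iff hj).mp
      (h.comp_injective fun _ _ hxy => (Prod.mk.inj hxy).1)
  · obtain ⟨i, hi⟩ := Function.ne_iff.mp hf0
    exact (summable_mul_left_iff hi).mp
      (h.comp_injective fun _ _ hxy => (Prod.mk.inj hxy).2)

theorem Real.pow_mul_mul_rpow_rpow {x y : ℝ} (hx : 0 < x) (hy : 0 ≤ y) (n : ℕ) (a b q : ℝ) :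
    x ^ n * (x ^ a * y ^ b) ^ q = x ^ (n + a * q) * y ^ (b * q) := by
  rw [Real.mul_rpow (Real.rpow_nonneg hx.le a) (Real.rpow_nonneg hy b), ← Real.rpow_mul hx.le,
    ← Real.rpow_mul hy, ← mul_assoc, ← Real.rpow_natCast, ← Real.rpow_add hx]

theorem heisenberg_eigenvalue_series_summable_iff
    (m : ℕ) (hm : 1 ≤ m) (p : ℝ) :
    Summable (fun z : ℕ+ × ℕ+ =>
        (z.1 : ℝ) ^ m *
          (((z.1 : ℝ) ^ ((1 : ℝ) / 2) * (z.2 : ℝ) ^ ((1 : ℝ) / (2 * (m : ℝ)))) ^ (-p))) ↔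
      p > 2 * (m : ℝ) + 2 := by
  have hm0 : (0 : ℝ) < m := by exact_mod_cast hm
  have hsplit : ∀ z : ℕ+ × ℕ+,
      (z.1 : ℝ) ^ m *
          (((z.1 : ℝ) ^ ((1 : ℝ) / 2) * (z.2 : ℝ) ^ ((1 : ℝ) / (2 * (m : ℝ)))) ^ (-p)) =
        (z.1 : ℝ) ^ (m - p / 2) * (z.2 : ℝ) ^ (-(p / (2 * m))) := fun z => by
    rw [Real.pow_mul_mul_rpow_rpow (by positivity) (by positivity)]
    ring_nf
  have hpos : ∀ (r : ℝ), 0 ≤ fun n : ℕ+ => (n : ℝ) ^ r := fun r n => by positivity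
  have hne : ∀ (r : ℝ), (fun n : ℕ+ => (n : ℝ) ^ r) ≠ 0 := fun r h => by
    simpa using congr_fun h 1
  simp_rw [hsplit, summable_prod_mul_iff_of_nonneg (hpos _) (hpos _) (hne _) (hne _),
    Real.summable_pnat_rpow_iff, neg_lt_neg_iff, one_lt_div (by positivity : (0 : ℝ) < 2 * m)]
  constructor
  · rintro ⟨h, -⟩
    linarith
  · intro h
    constructor <;> linarith
end
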